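/- The infimum V_0 := inf over Borel measurable α : [0,1] → [-1,1] of −∫_0^1 c(t)·α(t)·(∫_t^1 α(r) dr) dt is attained: there exists an admissible control α* with J(0, α*) = V_0. -/

import Mathlib

open MeasureTheory Set

noncomputable def tn (n : ℕ) : ℝ := 1 - 1 / 2 ^ n
noncomputable def sn (n : ℕ) : ℝ := (tn n + 3 * tn (n + 1)) / 4
noncomputable def c (x : ℝ) : ℝ :=
  ∑' n : ℕ, ((Ico (tn n) (sn n)).indicator (fun _ => (1 : ℝ)) x
    + 6 * (Ico (sn n) (tn (n + 1))).indicator (fun _ => (1 : ℝ)) x)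
noncomputable def J0 (α : ℝ → ℝ) : ℝ :=
  -∫ t in (0 : ℝ)..1, c t * α t * ∫ r in t..1, α r

def Admissible (α : ℝ → ℝ) : Prop := Measurable α ∧ ∀ x, α x ∈ Icc (-1 : ℝ) 1

/-! The constant control `α ≡ 1` is optimal. Writing `X t = ∫ r in t..1, α r`, the integrand
`α X` equals `-(X²)'/2` almost everywhere, so the integral of `c α X` over `[tn n, tn (n+1)]`
depends only on the values of `X` at `tn n`, `sn n` and `tn (n+1)`. Telescoping, the integral up
to `tn N` is `X(0)²/2 - X(tn N)²/2 + (5/2) ∑_{n<N} (X(sn n)² - X(tn (n+1))²)`. As `X` is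
1-Lipschitz with `X 1 = 0`, the `n`-th summand is at most `(9/64) 4⁻ⁿ`, so the integral over
`[0, 1]` is at most `1/2 + 15/32 = 31/32`, with equality for `X t = 1 - t`. -/

open Filter Topology

lemma tn_eq (n : ℕ) : tn n = 1 - (1 / 2) ^ n := by simp [tn]

lemma tn_zero : tn 0 = 0 := by simp [tn]

lemma one_sub_tn_succ (n : ℕ) : 1 - tn (n + 1) = (1 / 2) ^ n / 2 := by
  rw [tn_eq, pow_succ]; ring

lemma one_sub_sn (n : ℕ) : 1 - sn n = 5 / 8 * (1 / 2) ^ n := by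
  simp only [sn, tn_eq, pow_succ]; ring

lemma tn_succ_sub_sn (n : ℕ) : tn (n + 1) - sn n = (1 / 2) ^ n / 8 := by
  simp only [sn, tn_eq, pow_succ]; ring

lemma tn_le_sn (n : ℕ) : tn n ≤ sn n := by
  have : (0 : ℝ) < (1 / 2) ^ n := by positivity
  linarith [one_sub_sn n, tn_eq n]

lemma sn_le_tn_succ (n : ℕ) : sn n ≤ tn (n + 1) := by
  have : (0 : ℝ) < (1 / 2) ^ n := by positivity
  linarith [tn_succ_sub_sn n]

lemma tn_monotone : Monotone tn :=
  monotone_nat_of_le_succ fun n => (tn_le_sn n).trans (sn_le_tn_succ n)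

lemma tn_mem_Icc (n : ℕ) : tn n ∈ Icc (0 : ℝ) 1 := by
  rw [tn_eq]
  exact ⟨by linarith [pow_le_one₀ (n := n) (by norm_num : (0 : ℝ) ≤ 1 / 2) (by norm_num)],
    by linarith [pow_nonneg (by norm_num : (0 : ℝ) ≤ 1 / 2) n]⟩

lemma tendsto_tn : Tendsto tn atTop (𝓝 1) := by
  simpa [funext tn_eq] using
    tendsto_const_nhds.sub (tendsto_pow_atTop_nhds_zero_of_lt_one (r := (1 / 2 : ℝ))
      (by norm_num) (by norm_num))

noncomputable def cTerm (n : ℕ) (x : ℝ) : ℝ :=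
  (Ico (tn n) (sn n)).indicator (fun _ => (1 : ℝ)) x
    + 6 * (Ico (sn n) (tn (n + 1))).indicator (fun _ => (1 : ℝ)) x

lemma c_eq_tsum_cTerm (x : ℝ) : c x = ∑' n, cTerm n x := rfl

lemma cTerm_eq_zero {n : ℕ} {x : ℝ} (hx : x ∉ Ico (tn n) (tn (n + 1))) : cTerm n x = 0 := by
  have h₁ : x ∉ Ico (tn n) (sn n) := fun h => hx ⟨h.1, h.2.trans_le (sn_le_tn_succ n)⟩
  have h₂ : x ∉ Ico (sn n) (tn (n + 1)) := fun h => hx ⟨(tn_le_sn n).trans h.1, h.2⟩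
  simp [cTerm, h₁, h₂]

lemma hasSum_cTerm {n : ℕ} {x : ℝ} (hx : x ∈ Ico (tn n) (tn (n + 1))) :
    HasSum (fun m => cTerm m x) (cTerm n x) :=
  hasSum_single n fun _ hm => cTerm_eq_zero fun hx' =>
    Set.disjoint_left.1 (tn_monotone.pairwise_disjoint_on_Ico_succ hm) hx' hx

lemma exists_hasSum_cTerm (x : ℝ) : ∃ n, HasSum (fun m => cTerm m x) (cTerm n x) := by
  by_cases h : ∃ n, x ∈ Ico (tn n) (tn (n + 1))
  · obtain ⟨n, hn⟩ := h
    exact ⟨n, hasSum_cTerm hn⟩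
  · push Not at h
    exact ⟨0, hasSum_single 0 fun m _ => cTerm_eq_zero (h m)⟩

lemma c_eq_one {n : ℕ} {x : ℝ} (hx : x ∈ Ico (tn n) (sn n)) : c x = 1 := by
  have hx' : x ∉ Ico (sn n) (tn (n + 1)) := fun h => h.1.not_gt hx.2
  rw [c_eq_tsum_cTerm, (hasSum_cTerm ⟨hx.1, hx.2.trans_le (sn_le_tn_succ n)⟩).tsum_eq]
  simp [cTerm, hx, hx']

lemma c_eq_six {n : ℕ} {x : ℝ} (hx : x ∈ Ico (sn n) (tn (n + 1))) : c x = 6 := by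
  have hx' : x ∉ Ico (tn n) (sn n) := fun h => h.2.not_ge hx.1
  rw [c_eq_tsum_cTerm, (hasSum_cTerm ⟨(tn_le_sn n).trans hx.1, hx.2⟩).tsum_eq]
  simp [cTerm, hx, hx']

lemma abs_c_le (x : ℝ) : |c x| ≤ 7 := by
  obtain ⟨n, hn⟩ := exists_hasSum_cTerm x
  rw [c_eq_tsum_cTerm, hn.tsum_eq, cTerm]
  simp only [indicator_apply]
  split_ifs <;> norm_num

lemma measurable_c : Measurable c := by
  refine measurable_of_tendsto_metrizable (f := fun N x => ∑ m ∈ Finset.range N, cTerm m x)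
    (fun N => Finset.measurable_fun_sum _ fun m _ => ?_) (tendsto_pi_nhds.2 fun x => ?_)
  · exact (measurable_const.indicator measurableSet_Ico).add
      (measurable_const.mul (measurable_const.indicator measurableSet_Ico))
  · obtain ⟨n, hn⟩ := exists_hasSum_cTerm x
    rw [c_eq_tsum_cTerm, hn.tsum_eq]
    exact hn.tendsto_sum_nat

section Primitive

variable {f : ℝ → ℝ}

lemma MeasureTheory.LocallyIntegrable.intervalIntegrable (hf : LocallyIntegrable f volume)
    (a b : ℝ) : IntervalIntegrable f volume a b :=
  (hf.integrableOn_isCompact isCompact_uIcc).intervalIntegrable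

lemma MeasureTheory.LocallyIntegrable.absolutelyContinuousOnInterval_primitive
    (hf : LocallyIntegrable f volume) (c a b : ℝ) :
    AbsolutelyContinuousOnInterval (fun x => ∫ t in c..x, f t) a b := by
  have hint := hf.intervalIntegrable
  have hconst : AbsolutelyContinuousOnInterval (fun _ => ∫ t in c..a, f t) a b :=
    (LipschitzWith.const _).lipschitzOnWith.absolutelyContinuousOnInterval
  have hsplit : (fun x => ∫ t in c..x, f t) = fun x => (∫ t in c..a, f t) + ∫ t in a..x, f t :=
    funext fun x => (intervalIntegral.integral_add_adjacent_intervals (hint c a) (hint a x)).symm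
  rw [hsplit]
  exact hconst.fun_add ((hint a b).absolutelyContinuousOnInterval_intervalIntegral left_mem_uIcc)

/-- Since `x ↦ ∫ t in x..c, f t` has derivative `-f` almost everywhere, the integrand is
`-(1/2) d/dx (∫ t in x..c, f t)²`. -/
theorem integral_mul_integral_eq_sq_sub_sq (hf : LocallyIntegrable f volume) (a b c : ℝ) :
    ∫ x in a..b, f x * ∫ t in x..c, f t
      = ((∫ t in a..c, f t) ^ 2 - (∫ t in b..c, f t) ^ 2) / 2 := by
  set F : ℝ → ℝ := fun x => ∫ t in c..x, f t
  have hF := hf.absolutelyContinuousOnInterval_primitive c a b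
  have hderiv : ∀ᵐ x, deriv F x = f x :=
    (_root_.LocallyIntegrable.ae_hasDerivAt_integral hf).mono fun x hx => (hx c).deriv
  have hsymm : ∀ x, ∫ t in x..c, f t = -F x := fun x => intervalIntegral.integral_symm _ _
  have key := hF.integral_deriv_mul_eq_sub hF
  rw [intervalIntegral.integral_congr_ae (g := fun x => -2 * (f x * ∫ t in x..c, f t))
    (hderiv.mono fun x hx _ => by rw [hx, hsymm]; ring), intervalIntegral.integral_const_mul]
    at key
  rw [hsymm, hsymm]
  linarith

end Primitive

noncomputable def costSum (A B : ℕ → ℝ) (N : ℕ) : ℝ :=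
  ∑ n ∈ Finset.range N, ((A n ^ 2 - B n ^ 2) / 2 + 6 * ((B n ^ 2 - A (n + 1) ^ 2) / 2))

lemma costSum_eq (A B : ℕ → ℝ) (N : ℕ) :
    costSum A B N
      = A 0 ^ 2 / 2 - A N ^ 2 / 2 + 5 / 2 * ∑ n ∈ Finset.range N, (B n ^ 2 - A (n + 1) ^ 2) := by
  induction N with
  | zero => simp [costSum]
  | succ N ih =>
    rw [costSum, Finset.sum_range_succ, ← costSum, ih, Finset.sum_range_succ]
    ring

lemma sq_sub_sq_le_of_abs_le {a b h : ℝ} (ha : |a| ≤ h / 2) (hba : |b - a| ≤ h / 8) :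
    b ^ 2 - a ^ 2 ≤ 9 / 64 * h ^ 2 := by
  have hb : |b| ≤ |a| + h / 8 := by
    calc |b| = |(b - a) + a| := by ring_nf
      _ ≤ |b - a| + |a| := abs_add_le _ _
      _ ≤ |a| + h / 8 := by linarith
  nlinarith [sq_abs a, sq_abs b, abs_nonneg a, abs_nonneg b]

lemma half_pow_sq (n : ℕ) : ((1 / 2 : ℝ) ^ n) ^ 2 = (1 / 4) ^ n := by
  rw [← pow_mul, mul_comm, pow_mul]; norm_num

lemma geom_quarter_sum_le (N : ℕ) : ∑ n ∈ Finset.range N, (1 / 4 : ℝ) ^ n ≤ 4 / 3 := by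
  have h := (summable_geometric_of_lt_one (r := (1 / 4 : ℝ)) (by norm_num) (by norm_num))
  calc ∑ n ∈ Finset.range N, (1 / 4 : ℝ) ^ n ≤ ∑' n, (1 / 4 : ℝ) ^ n :=
        h.sum_le_tsum _ fun n _ => by positivity
    _ = 4 / 3 := by rw [tsum_geometric_of_lt_one (by norm_num) (by norm_num)]; norm_num

/-- The constraints are those satisfied by `A n = X (tn n)`, `B n = X (sn n)` for a
1-Lipschitz `X` with `X 1 = 0`. -/
lemma costSum_le {A B : ℕ → ℝ} (hA₀ : |A 0| ≤ 1) (hA : ∀ n, |A (n + 1)| ≤ (1 / 2) ^ n / 2)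
    (hBA : ∀ n, |B n - A (n + 1)| ≤ (1 / 2) ^ n / 8) (N : ℕ) : costSum A B N ≤ 31 / 32 := by
  have hterm : ∀ n, B n ^ 2 - A (n + 1) ^ 2 ≤ 9 / 64 * (1 / 4 : ℝ) ^ n := fun n => by
    rw [← half_pow_sq]; exact sq_sub_sq_le_of_abs_le (hA n) (hBA n)
  have hsum : ∑ n ∈ Finset.range N, (B n ^ 2 - A (n + 1) ^ 2) ≤ 9 / 64 * (4 / 3) := by
    grw [Finset.sum_le_sum fun n _ => hterm n, ← Finset.mul_sum, geom_quarter_sum_le]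
  rw [costSum_eq]
  nlinarith [sq_abs (A 0), abs_nonneg (A 0), sq_nonneg (A N)]

lemma tendsto_costSum_tn_sn :
    Tendsto (costSum (fun n => 1 - tn n) (fun n => 1 - sn n)) atTop (𝓝 (31 / 32)) := by
  have hgeom := (hasSum_geometric_of_lt_one (r := (1 / 4 : ℝ)) (by norm_num) (by norm_num))
  have hpow := tendsto_pow_atTop_nhds_zero_of_lt_one (r := (1 / 4 : ℝ)) (by norm_num) (by norm_num)
  have hform : costSum (fun n => 1 - tn n) (fun n => 1 - sn n) = fun N =>
      1 / 2 - (1 / 4 : ℝ) ^ N / 2 + 45 / 128 * ∑ n ∈ Finset.range N, (1 / 4 : ℝ) ^ n := by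
    funext N
    have hterm : ∀ n, (1 - sn n) ^ 2 - (1 - tn (n + 1)) ^ 2 = 9 / 64 * (1 / 4 : ℝ) ^ n := fun n => by
      rw [one_sub_sn, one_sub_tn_succ, ← half_pow_sq]; ring
    simp only [costSum_eq, hterm, ← Finset.mul_sum]
    simp only [tn_eq, sub_sub_cancel, ← half_pow_sq]
    ring
  rw [hform]
  convert ((tendsto_const_nhds (x := (1 / 2 : ℝ))).sub (hpow.div_const 2)).add
    (hgeom.tendsto_sum_nat.const_mul (45 / 128)) using 2
  norm_num

noncomputable def tailIntegral (α : ℝ → ℝ) (t : ℝ) : ℝ := ∫ r in t..1, α r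

section Functional

variable {α : ℝ → ℝ}

lemma J0_eq (α : ℝ → ℝ) : J0 α = -∫ t in (0 : ℝ)..1, c t * α t * tailIntegral α t := rfl

lemma continuous_tailIntegral (hα : LocallyIntegrable α volume) : Continuous (tailIntegral α) := by
  have h := intervalIntegral.continuous_primitive (fun a b => hα.intervalIntegrable a b) 1
  have hsymm : tailIntegral α = fun t => -∫ r in (1 : ℝ)..t, α r :=
    funext fun t => intervalIntegral.integral_symm 1 t
  rw [hsymm]
  exact h.neg

lemma integral_mul_tailIntegral (hα : LocallyIntegrable α volume) (a b : ℝ) :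
    ∫ t in a..b, α t * tailIntegral α t
      = (tailIntegral α a ^ 2 - tailIntegral α b ^ 2) / 2 :=
  integral_mul_integral_eq_sq_sub_sq hα a b 1

lemma intervalIntegrable_cost (hα : LocallyIntegrable α volume) (a b : ℝ) :
    IntervalIntegrable (fun t => c t * α t * tailIntegral α t) volume a b := by
  have h := (hα.intervalIntegrable a b).mul_continuousOn (continuous_tailIntegral hα).continuousOn
  rw [intervalIntegrable_iff] at h ⊢
  simpa only [IntegrableOn, mul_assoc] using
    h.bdd_mul measurable_c.aestronglyMeasurable (ae_of_all _ fun t => abs_c_le t)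

lemma integral_cost_tn_succ (hα : LocallyIntegrable α volume) (n : ℕ) :
    ∫ t in tn n..tn (n + 1), c t * α t * tailIntegral α t
      = (tailIntegral α (tn n) ^ 2 - tailIntegral α (sn n) ^ 2) / 2
        + 6 * ((tailIntegral α (sn n) ^ 2 - tailIntegral α (tn (n + 1)) ^ 2) / 2) := by
  have h₁ : ∫ t in tn n..sn n, c t * α t * tailIntegral α t
      = ∫ t in tn n..sn n, α t * tailIntegral α t :=
    intervalIntegral.integral_congr_Ioo_of_le (tn_le_sn n) fun t ht => by
      rw [c_eq_one ⟨ht.1.le, ht.2⟩, one_mul]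
  have h₆ : ∫ t in sn n..tn (n + 1), c t * α t * tailIntegral α t
      = ∫ t in sn n..tn (n + 1), 6 * (α t * tailIntegral α t) :=
    intervalIntegral.integral_congr_Ioo_of_le (sn_le_tn_succ n) fun t ht => by
      rw [c_eq_six ⟨ht.1.le, ht.2⟩, mul_assoc]
  rw [← intervalIntegral.integral_add_adjacent_intervals (intervalIntegrable_cost hα _ _)
    (intervalIntegrable_cost hα _ _), h₁, h₆, intervalIntegral.integral_const_mul,
    integral_mul_tailIntegral hα, integral_mul_tailIntegral hα]

lemma integral_cost_tn (hα : LocallyIntegrable α volume) (N : ℕ) :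
    ∫ t in (0 : ℝ)..tn N, c t * α t * tailIntegral α t
      = costSum (fun n => tailIntegral α (tn n)) (fun n => tailIntegral α (sn n)) N := by
  rw [← tn_zero, ← intervalIntegral.sum_integral_adjacent_intervals
    fun k _ => intervalIntegrable_cost hα _ _, costSum]
  exact Finset.sum_congr rfl fun n _ => integral_cost_tn_succ hα n

lemma tendsto_costSum_tailIntegral (hα : LocallyIntegrable α volume) :
    Tendsto (costSum (fun n => tailIntegral α (tn n)) (fun n => tailIntegral α (sn n))) atTop
      (𝓝 (∫ t in (0 : ℝ)..1, c t * α t * tailIntegral α t)) := by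
  have hcont := intervalIntegral.continuousOn_primitive_interval'
    (intervalIntegrable_cost hα 0 1) left_mem_uIcc
  have htn : Tendsto tn atTop (𝓝[uIcc 0 1] 1) :=
    tendsto_nhdsWithin_iff.2 ⟨tendsto_tn, Eventually.of_forall fun n => by
      rw [uIcc_of_le zero_le_one]; exact tn_mem_Icc n⟩
  convert (hcont 1 right_mem_uIcc).tendsto.comp htn using 1
  funext N
  exact (integral_cost_tn hα N).symm

lemma Admissible.abs_le_one (hα : Admissible α) (x : ℝ) : |α x| ≤ 1 := abs_le.2 (hα.2 x)

lemma Admissible.locallyIntegrable (hα : Admissible α) : LocallyIntegrable α volume :=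
  (locallyIntegrable_const (1 : ℝ)).mono hα.1.aestronglyMeasurable
    (ae_of_all _ fun x => by simpa using hα.abs_le_one x)

lemma Admissible.abs_tailIntegral_sub_le (hα : Admissible α) (a b : ℝ) :
    |tailIntegral α a - tailIntegral α b| ≤ |b - a| := by
  have hint := hα.locallyIntegrable.intervalIntegrable
  have hsub : tailIntegral α a - tailIntegral α b = ∫ t in a..b, α t := by
    rw [tailIntegral, tailIntegral,
      ← intervalIntegral.integral_add_adjacent_intervals (hint a b) (hint b 1)]
    ring
  simpa [hsub] using
    intervalIntegral.norm_integral_le_of_norm_le_const (C := 1) (f := α) fun x _ => by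
      simpa using hα.abs_le_one x

lemma Admissible.abs_tailIntegral_le (hα : Admissible α) (t : ℝ) :
    |tailIntegral α t| ≤ |1 - t| := by
  simpa [tailIntegral] using hα.abs_tailIntegral_sub_le t 1

lemma Admissible.neg_le_J0 (hα : Admissible α) : -(31 / 32) ≤ J0 α := by
  have hbound := costSum_le (A := fun n => tailIntegral α (tn n))
    (B := fun n => tailIntegral α (sn n))
    (by simpa [tn_zero] using hα.abs_tailIntegral_le 0)
    (fun n => (hα.abs_tailIntegral_le _).trans_eq <| by
      rw [abs_of_nonneg (sub_nonneg.2 (tn_mem_Icc _).2), one_sub_tn_succ])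
    (fun n => (hα.abs_tailIntegral_sub_le _ _).trans_eq <| by
      rw [abs_of_nonneg (sub_nonneg.2 (sn_le_tn_succ n)), tn_succ_sub_sn])
  have := le_of_tendsto' (tendsto_costSum_tailIntegral hα.locallyIntegrable) hbound
  rw [J0_eq]
  linarith

end Functional

lemma admissible_one : Admissible fun _ => 1 :=
  ⟨measurable_const, fun _ => ⟨by norm_num, le_rfl⟩⟩

lemma J0_one : J0 (fun _ => 1) = -(31 / 32) := by
  have htail : tailIntegral (fun _ => 1) = fun t => 1 - t := funext fun t => by simp [tailIntegral]
  have h := tendsto_costSum_tailIntegral (locallyIntegrable_const (1 : ℝ))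
  rw [htail] at h
  rw [J0_eq, htail, tendsto_nhds_unique h tendsto_costSum_tn_sn]

theorem stmt12 :
    ∃ αs : ℝ → ℝ, Admissible αs ∧ J0 αs = sInf {v : ℝ | ∃ α, Admissible α ∧ v = J0 α} := by
  refine ⟨fun _ => 1, admissible_one, ?_⟩
  refine (IsLeast.csInf_eq (s := {v : ℝ | ∃ α, Admissible α ∧ v = J0 α})
    ⟨⟨_, admissible_one, rfl⟩, ?_⟩).symm
  rintro _ ⟨α, hα, rfl⟩
  rw [J0_one]
  exact hα.neg_le_J0
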